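/- Let δ ∈ (0,1), a > 0 and A > 0 be real numbers. Define B(χ) = a·χ^δ, C(χ) = a·I(χ,δ), and ρ(χ) = (e^{B(χ)−C(χ)} − 1)/√((e^A − 1)(e^{B(χ)} − 1)) for χ > 0. Then ρ attains a global maximum over (0,∞) at some point χ* > 1, and this maximizer satisfies the equation (1 − χ*)·e^{B(χ*)} + (1 + χ*)·e^{C(χ*)} = 2. -/

import Mathlib

open Real Filter Set MeasureTheory

/-- `Ifun u δ = δ·∫₀ᵘ t^δ/(1+t) dt`. -/
noncomputable def Ifun (u δ : ℝ) : ℝ := δ * ∫ t in (0:ℝ)..u, t ^ δ / (1 + t)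

/-!
Write `D = B - C`. Since `χ ^ δ = δ ∫₀^χ t^(δ-1) dt`, we get `D = a δ ∫₀^χ t^(δ-1)/(1+t) dt`, which
is positive and bounded by `a / (1 - δ)`, while `B` increases from `0` to `∞`. Hence
`(e^A - 1) ρ² = (e^D - 1)² / (e^B - 1)` tends to `0` at both ends of `(0, ∞)`, so it attains its
maximum at an interior point, where its derivative vanishes. As `C' = B' χ / (1 + χ)`, this
condition is `(1 - χ) e^B + (1 + χ) e^C = 2`, which forces `χ > 1` because `B, C > 0`.
-/

open Topology

lemma intervalIntegrable_rpow_div_one_add {r p q : ℝ} (hr : -1 < r) (hp : 0 ≤ p) (hq : 0 ≤ q) :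
    IntervalIntegrable (fun t => t ^ r / (1 + t)) volume p q := by
  have hinv : ContinuousOn (fun t : ℝ => (1 + t)⁻¹) (uIcc p q) :=
    ContinuousOn.inv₀ (by fun_prop) fun t ht => by
      have : 0 ≤ t := (le_min hp hq).trans ht.1
      positivity
  simpa only [div_eq_mul_inv] using
    (intervalIntegral.intervalIntegrable_rpow' hr).mul_continuousOn hinv

lemma integral_rpow_div_one_add_pos {r x : ℝ} (hr : -1 < r) (hx : 0 < x) :
    0 < ∫ t in (0:ℝ)..x, t ^ r / (1 + t) :=
  intervalIntegral.intervalIntegral_pos_of_pos_on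
    (intervalIntegrable_rpow_div_one_add hr le_rfl hx.le)
    (fun t ht => div_pos (rpow_pos_of_pos ht.1 r) (by linarith [ht.1])) hx

lemma Ifun_pos {δ x : ℝ} (hδ : 0 < δ) (hx : 0 < x) : 0 < Ifun x δ :=
  mul_pos hδ (integral_rpow_div_one_add_pos (by linarith) hx)

lemma hasDerivAt_Ifun {δ x : ℝ} (hδ : -1 < δ) (hx : 0 < x) :
    HasDerivAt (fun χ => Ifun χ δ) (δ * (x ^ δ / (1 + x))) x := by
  have hmeas : StronglyMeasurableAtFilter (fun t : ℝ => t ^ δ / (1 + t)) (𝓝 x) :=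
    ((measurable_id.pow_const δ).div (measurable_const.add measurable_id)).stronglyMeasurable
      |>.stronglyMeasurableAtFilter
  have hcont : ContinuousAt (fun t : ℝ => t ^ δ / (1 + t)) x :=
    ((continuousAt_rpow_const x δ (Or.inl hx.ne')).div (by fun_prop) (by positivity))
  exact (intervalIntegral.integral_hasDerivAt_right
    (intervalIntegrable_rpow_div_one_add hδ le_rfl hx.le) hmeas hcont).const_mul δ

lemma integral_rpow_sub_one {δ x : ℝ} (hδ : 0 < δ) :
    ∫ t in (0:ℝ)..x, t ^ (δ - 1) = x ^ δ / δ := by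
  rw [integral_rpow (Or.inl (by linarith)), sub_add_cancel, zero_rpow hδ.ne', sub_zero]

lemma rpow_sub_Ifun {δ x : ℝ} (hδ : 0 < δ) (hx : 0 ≤ x) :
    x ^ δ - Ifun x δ = δ * ∫ t in (0:ℝ)..x, t ^ (δ - 1) / (1 + t) := by
  have hpow : x ^ δ = δ * ∫ t in (0:ℝ)..x, t ^ (δ - 1) := by
    rw [integral_rpow_sub_one hδ]; field_simp
  rw [Ifun, hpow, ← mul_sub, ← intervalIntegral.integral_sub
    (intervalIntegral.intervalIntegrable_rpow' (by linarith))
    (intervalIntegrable_rpow_div_one_add (by linarith) le_rfl hx)]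
  congr 1
  refine intervalIntegral.integral_congr fun t ht => ?_
  have ht : 0 ≤ t := by rw [uIcc_of_le hx] at ht; exact ht.1
  have h1t : 1 + t ≠ 0 := by positivity
  have hts : t ^ δ = t ^ (δ - 1) * t := by
    rw [← rpow_add_one' ht (by simp [hδ.ne']), sub_add_cancel]
  rw [hts]
  field_simp
  ring

lemma rpow_sub_Ifun_pos {δ x : ℝ} (hδ : 0 < δ) (hx : 0 < x) : 0 < x ^ δ - Ifun x δ := by
  rw [rpow_sub_Ifun hδ hx.le]
  exact mul_pos hδ (integral_rpow_div_one_add_pos (by linarith) hx)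

lemma mul_rpow_sub_mul_Ifun_pos {a δ x : ℝ} (ha : 0 < a) (hδ : 0 < δ) (hx : 0 < x) :
    0 < a * x ^ δ - a * Ifun x δ := by
  rw [← mul_sub]
  exact mul_pos ha (rpow_sub_Ifun_pos hδ hx)

lemma integral_rpow_sub_one_div_one_add_le {δ x : ℝ} (hδ : 0 < δ) (hx : 0 ≤ x) :
    ∫ t in (0:ℝ)..x, t ^ (δ - 1) / (1 + t) ≤ x ^ δ / δ := by
  rw [← integral_rpow_sub_one hδ]
  refine intervalIntegral.integral_mono_on hx
    (intervalIntegrable_rpow_div_one_add (by linarith) le_rfl hx)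
    (intervalIntegral.intervalIntegrable_rpow' (by linarith)) fun t ht => ?_
  exact div_le_self (rpow_nonneg ht.1 _) (by linarith [ht.1])

lemma integral_one_rpow_sub_one_div_one_add_le {δ x : ℝ} (hδ : δ < 1) (hx : 1 ≤ x) :
    ∫ t in (1:ℝ)..x, t ^ (δ - 1) / (1 + t) ≤ 1 / (1 - δ) := by
  have h0 : (0:ℝ) ∉ uIcc 1 x := by rw [uIcc_of_le hx]; exact fun h => by linarith [h.1]
  have hmajor : ∫ t in (1:ℝ)..x, t ^ (δ - 1) / (1 + t) ≤ ∫ t in (1:ℝ)..x, t ^ (δ - 1 - 1) := by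
    refine intervalIntegral.integral_mono_on hx
      (ContinuousOn.intervalIntegrable (ContinuousOn.div
        (continuousOn_id.rpow_const fun t ht => Or.inl (ne_of_mem_of_not_mem ht h0))
        (by fun_prop) fun t ht => by rw [uIcc_of_le hx] at ht; linarith [ht.1]))
      (intervalIntegral.intervalIntegrable_rpow (Or.inr h0)) fun t ht => ?_
    have ht : 0 < t := by linarith [ht.1]
    rw [rpow_sub_one ht.ne' (δ - 1)]
    exact div_le_div_of_nonneg_left (rpow_nonneg ht.le _) ht (by linarith)
  rw [integral_rpow (Or.inr ⟨fun h => by linarith, h0⟩), sub_add_cancel, one_rpow] at hmajor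
  have hxδ : 0 < x ^ (δ - 1) := rpow_pos_of_pos (by linarith) _
  calc _ ≤ (x ^ (δ - 1) - 1) / (δ - 1) := hmajor
    _ = (1 - x ^ (δ - 1)) / (1 - δ) := by rw [← neg_div_neg_eq, neg_sub, neg_sub]
    _ ≤ 1 / (1 - δ) := by gcongr; linarith

lemma rpow_sub_Ifun_le {δ x : ℝ} (hδ₀ : 0 < δ) (hδ₁ : δ < 1) (hx : 0 ≤ x) :
    x ^ δ - Ifun x δ ≤ 1 / (1 - δ) := by
  have hJ : ∫ t in (0:ℝ)..x, t ^ (δ - 1) / (1 + t) ≤ 1 / δ + 1 / (1 - δ) := by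
    rcases le_total x 1 with hx1 | hx1
    · calc _ ≤ x ^ δ / δ := integral_rpow_sub_one_div_one_add_le hδ₀ hx
        _ ≤ 1 / δ := by gcongr; exact rpow_le_one hx hx1 hδ₀.le
        _ ≤ 1 / δ + 1 / (1 - δ) := le_add_of_nonneg_right (one_div_nonneg.2 (by linarith))
    · rw [← intervalIntegral.integral_add_adjacent_intervals
        (intervalIntegrable_rpow_div_one_add (by linarith) le_rfl zero_le_one)
        (intervalIntegrable_rpow_div_one_add (by linarith) zero_le_one hx)]
      gcongr
      · simpa using integral_rpow_sub_one_div_one_add_le hδ₀ zero_le_one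
      · exact integral_one_rpow_sub_one_div_one_add_le hδ₁ hx1
  rw [rpow_sub_Ifun hδ₀ hx]
  calc _ ≤ δ * (1 / δ + 1 / (1 - δ)) := by gcongr
    _ = 1 / (1 - δ) := by
      have : 1 - δ ≠ 0 := by linarith
      field_simp
      ring

theorem ContinuousOn.exists_isMaxOn_Ioi {β : Type*} [LinearOrder β] [TopologicalSpace β]
    [ClosedIciTopology β] {f : ℝ → β} {a x₀ : ℝ} (hf : ContinuousOn f (Ioi a)) (hx₀ : a < x₀)
    (hleft : ∀ᶠ x in 𝓝[>] a, f x ≤ f x₀) (hright : ∀ᶠ x in atTop, f x ≤ f x₀) :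
    ∃ x, a < x ∧ IsMaxOn f (Ioi a) x := by
  obtain ⟨ε, hε : a < ε, hεleft⟩ := mem_nhdsGT_iff_exists_Ioo_subset.1 hleft
  obtain ⟨c, hac, hcε⟩ := exists_between hε
  obtain ⟨R, hR⟩ := eventually_atTop.1 hright
  have hK : Icc (min c x₀) (max R x₀) ⊆ Ioi a := fun y hy => (lt_min hac hx₀).trans_le hy.1
  obtain ⟨x, hxK, hxmax⟩ := isCompact_Icc.exists_isMaxOn
    ⟨x₀, min_le_right c x₀, le_max_right R x₀⟩ (hf.mono hK)
  have hx₀x : f x₀ ≤ f x := hxmax ⟨min_le_right c x₀, le_max_right R x₀⟩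
  refine ⟨x, hK hxK, fun y hy => ?_⟩
  by_cases hyK : y ∈ Icc (min c x₀) (max R x₀)
  · exact hxmax hyK
  rcases not_and_or.1 hyK with hy' | hy'
  · have hyc : y < c := (not_le.1 hy').trans_le (min_le_left c x₀)
    exact (hεleft ⟨hy, hyc.trans hcε⟩).trans hx₀x
  · exact (hR y ((le_max_left R x₀).trans (not_le.1 hy').le)).trans hx₀x

/-- `(e^A - 1) ρ(χ)²`, which has the same maximizers on `(0, ∞)` as `ρ`. -/
noncomputable def corrSq (a δ χ : ℝ) : ℝ :=
  (exp (a * χ ^ δ - a * Ifun χ δ) - 1) ^ 2 / (exp (a * χ ^ δ) - 1)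

lemma sq_exp_sub_one_div_le_exp_sub_one {b d : ℝ} (hd : 0 ≤ d) (hdb : d ≤ b) :
    (exp d - 1) ^ 2 / (exp b - 1) ≤ exp b - 1 := by
  have hd' : 0 ≤ exp d - 1 := by linarith [add_one_le_exp d]
  calc _ ≤ (exp b - 1) ^ 2 / (exp b - 1) := by
        gcongr
        linarith [add_one_le_exp b]
    _ = exp b - 1 := by rw [sq, mul_self_div_self]

lemma sq_exp_sub_one_div_le_exp_two_mul_div {b d M : ℝ} (hb : 0 ≤ b) (hd : 0 ≤ d) (hdM : d ≤ M) :
    (exp d - 1) ^ 2 / (exp b - 1) ≤ exp (2 * M) / (exp b - 1) := by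
  have hb' : 0 ≤ exp b - 1 := by linarith [add_one_le_exp b]
  have hd' : 0 ≤ exp d - 1 := by linarith [add_one_le_exp d]
  gcongr
  calc (exp d - 1) ^ 2 ≤ exp M ^ 2 := by gcongr; linarith [exp_le_exp.2 hdM]
    _ = exp (2 * M) := by rw [sq, ← exp_add, two_mul]

lemma corrSq_nonneg {a δ x : ℝ} (ha : 0 ≤ a) (hx : 0 ≤ x) : 0 ≤ corrSq a δ x :=
  div_nonneg (sq_nonneg _)
    (sub_nonneg.2 (one_le_exp (mul_nonneg ha (rpow_nonneg hx δ))))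

lemma corrSq_pos {a δ x : ℝ} (ha : 0 < a) (hδ : 0 < δ) (hx : 0 < x) : 0 < corrSq a δ x := by
  have hu := one_lt_exp_iff.2 (mul_rpow_sub_mul_Ifun_pos ha hδ hx)
  have hv := one_lt_exp_iff.2 (mul_pos ha (rpow_pos_of_pos hx δ))
  exact div_pos (pow_pos (sub_pos.2 hu) 2) (sub_pos.2 hv)

lemma tendsto_corrSq_nhdsGT_zero {a δ : ℝ} (ha : 0 ≤ a) (hδ : 0 < δ) :
    Tendsto (corrSq a δ) (𝓝[>] 0) (𝓝 0) := by
  have hB : Tendsto (fun χ : ℝ => exp (a * χ ^ δ) - 1) (𝓝[>] 0) (𝓝 0) := by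
    have : ContinuousAt (fun χ : ℝ => exp (a * χ ^ δ) - 1) 0 :=
      ((continuousAt_rpow_const 0 δ (Or.inr hδ.le)).const_mul a).rexp.sub continuousAt_const
    simpa [zero_rpow hδ.ne'] using this.tendsto.mono_left nhdsWithin_le_nhds
  refine tendsto_of_tendsto_of_tendsto_of_le_of_le' tendsto_const_nhds hB ?_ ?_
  · filter_upwards [self_mem_nhdsWithin] with χ hχ using corrSq_nonneg ha (le_of_lt hχ)
  · filter_upwards [self_mem_nhdsWithin] with χ (hχ : 0 < χ)
    refine sq_exp_sub_one_div_le_exp_sub_one ?_ (sub_le_self _ (mul_nonneg ha (Ifun_pos hδ hχ).le))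
    rw [← mul_sub]
    exact mul_nonneg ha (rpow_sub_Ifun_pos hδ hχ).le

lemma tendsto_corrSq_atTop {a δ : ℝ} (ha : 0 < a) (hδ₀ : 0 < δ) (hδ₁ : δ < 1) :
    Tendsto (corrSq a δ) atTop (𝓝 0) := by
  have hB : Tendsto (fun χ : ℝ => exp (a * χ ^ δ) - 1) atTop atTop := by
    simpa only [sub_eq_add_neg, Function.comp_def] using tendsto_atTop_add_const_right _ (-1)
      (tendsto_exp_atTop.comp ((tendsto_rpow_atTop hδ₀).const_mul_atTop ha))
  refine tendsto_of_tendsto_of_tendsto_of_le_of_le' tendsto_const_nhds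
    (tendsto_const_nhds (x := exp (2 * (a / (1 - δ)))).div_atTop hB) ?_ ?_
  · filter_upwards [eventually_ge_atTop 0] with χ hχ using corrSq_nonneg ha.le hχ
  · filter_upwards [eventually_gt_atTop 0] with χ hχ
    refine sq_exp_sub_one_div_le_exp_two_mul_div (mul_pos ha (rpow_pos_of_pos hχ δ)).le ?_ ?_ <;>
      rw [← mul_sub]
    · exact mul_nonneg ha.le (rpow_sub_Ifun_pos hδ₀ hχ).le
    · rw [← mul_one_div]
      exact mul_le_mul_of_nonneg_left (rpow_sub_Ifun_le hδ₀ hδ₁ hχ.le) ha.le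

lemma hasDerivAt_corrSq {a δ x : ℝ} (ha : 0 < a) (hδ : 0 < δ) (hx : 0 < x) :
    HasDerivAt (corrSq a δ)
      (a * δ * x ^ (δ - 1) * (exp (a * x ^ δ - a * Ifun x δ) - 1) *
        (2 * exp (a * x ^ δ - a * Ifun x δ) * (exp (a * x ^ δ) - 1) / (1 + x) -
          (exp (a * x ^ δ - a * Ifun x δ) - 1) * exp (a * x ^ δ)) /
        (exp (a * x ^ δ) - 1) ^ 2) x := by
  have hB : HasDerivAt (fun χ : ℝ => a * χ ^ δ) (a * δ * x ^ (δ - 1)) x := by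
    simpa only [mul_assoc] using (hasDerivAt_rpow_const (p := δ) (Or.inl hx.ne')).const_mul a
  have hC : HasDerivAt (fun χ => a * Ifun χ δ) (a * δ * x ^ (δ - 1) * x / (1 + x)) x := by
    have hxδ : x ^ δ = x ^ (δ - 1) * x := by rw [← rpow_add_one hx.ne', sub_add_cancel]
    refine ((hasDerivAt_Ifun (δ := δ) (by linarith) hx).const_mul a).congr_deriv ?_
    rw [hxδ]
    ring
  have hv : exp (a * x ^ δ) - 1 ≠ 0 :=
    (sub_pos.2 (one_lt_exp_iff.2 (mul_pos ha (rpow_pos_of_pos hx δ)))).ne'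
  refine (((((hB.sub hC).exp).sub_const 1).pow 2).div (hB.exp.sub_const 1) hv).congr_deriv ?_
  have h1x : 1 + x ≠ 0 := by positivity
  simp only [Pi.sub_apply, Pi.pow_apply]
  field_simp
  ring

lemma corrSq_critical_point {a δ x : ℝ} (ha : 0 < a) (hδ : 0 < δ) (hx : 0 < x)
    (hmax : IsLocalMax (corrSq a δ) x) :
    (1 - x) * exp (a * x ^ δ) + (1 + x) * exp (a * Ifun x δ) = 2 := by
  have hzero := hmax.hasDerivAt_eq_zero (hasDerivAt_corrSq ha hδ hx)
  have hv : exp (a * x ^ δ) - 1 ≠ 0 :=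
    (sub_pos.2 (one_lt_exp_iff.2 (mul_pos ha (rpow_pos_of_pos hx δ)))).ne'
  have hu : exp (a * x ^ δ - a * Ifun x δ) - 1 ≠ 0 :=
    (sub_pos.2 (one_lt_exp_iff.2 (mul_rpow_sub_mul_Ifun_pos ha hδ hx))).ne'
  simp only [div_eq_zero_iff, mul_eq_zero, pow_eq_zero_iff two_ne_zero, hv, hu, ha.ne', hδ.ne',
    (rpow_pos_of_pos hx _).ne', sub_eq_zero, or_false, false_or] at hzero
  rw [exp_sub] at hzero
  have h1x : 1 + x ≠ 0 := by positivity
  field_simp at hzero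
  linear_combination hzero

lemma div_sqrt_mul_eq {u v k : ℝ} (hu : 0 ≤ u) (hv : 0 ≤ v) :
    u / √(k * v) = √(u ^ 2 / v) / √k := by
  rw [sqrt_mul' k hv, sqrt_div (sq_nonneg u), sqrt_sq hu, div_div, mul_comm]

theorem correlation_global_max_general
    (δ a A : ℝ) (hδ : δ ∈ Set.Ioo (0:ℝ) 1) (ha : 0 < a)
    (B C ρ : ℝ → ℝ)
    (hB : ∀ χ, B χ = a * χ ^ δ)
    (hC : ∀ χ, C χ = a * Ifun χ δ)
    (hρ : ∀ χ, 0 < χ → ρ χ =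
      (Real.exp (B χ - C χ) - 1) /
        Real.sqrt ((Real.exp A - 1) * (Real.exp (B χ) - 1))) :
    ∃ χs : ℝ, 1 < χs ∧ (∀ χ, 0 < χ → ρ χ ≤ ρ χs) ∧
      (1 - χs) * Real.exp (B χs) + (1 + χs) * Real.exp (C χs) = 2 := by
  obtain ⟨hδ₀, hδ₁⟩ := hδ
  obtain rfl : B = fun χ => a * χ ^ δ := funext hB
  obtain rfl : C = fun χ => a * Ifun χ δ := funext hC
  have hpos := corrSq_pos ha hδ₀ one_pos
  obtain ⟨χs, hχs : 0 < χs, hmax⟩ := ContinuousOn.exists_isMaxOn_Ioi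
    (fun x hx => (hasDerivAt_corrSq ha hδ₀ hx).continuousAt.continuousWithinAt) one_pos
    ((tendsto_corrSq_nhdsGT_zero ha.le hδ₀).eventually (ge_mem_nhds hpos))
    ((tendsto_corrSq_atTop ha hδ₀ hδ₁).eventually (ge_mem_nhds hpos))
  have hcrit := corrSq_critical_point ha hδ₀ hχs (hmax.isLocalMax (Ioi_mem_nhds hχs))
  have hρF : ∀ χ, 0 < χ → ρ χ = √(corrSq a δ χ) / √(exp A - 1) := fun χ hχ => by
    rw [hρ χ hχ]
    exact div_sqrt_mul_eq (sub_nonneg.2 (one_le_exp (mul_rpow_sub_mul_Ifun_pos ha hδ₀ hχ).le))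
      (sub_nonneg.2 (one_le_exp (mul_pos ha (rpow_pos_of_pos hχ δ)).le))
  refine ⟨χs, ?_, fun χ hχ => ?_, hcrit⟩
  · have hP : 1 ≤ exp (a * χs ^ δ) := one_le_exp (mul_pos ha (rpow_pos_of_pos hχs δ)).le
    have hQ : 1 < exp (a * Ifun χs δ) := one_lt_exp_iff.2 (mul_pos ha (Ifun_pos hδ₀ hχs))
    by_contra! h
    nlinarith [mul_le_mul_of_nonneg_left hP (sub_nonneg.2 h)]
  · rw [hρF χ hχ, hρF χs hχs]
    gcongr
    exact hmax hχ

theorem correlation_global_max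
    (δ a A : ℝ) (hδ : δ ∈ Set.Ioo (0:ℝ) 1) (ha : 0 < a) (hA : 0 < A)
    (B C ρ : ℝ → ℝ)
    (hB : ∀ χ, B χ = a * χ ^ δ)
    (hC : ∀ χ, C χ = a * Ifun χ δ)
    (hρ : ∀ χ, 0 < χ → ρ χ =
      (Real.exp (B χ - C χ) - 1) /
        Real.sqrt ((Real.exp A - 1) * (Real.exp (B χ) - 1))) :
    ∃ χs : ℝ, 1 < χs ∧ (∀ χ, 0 < χ → ρ χ ≤ ρ χs) ∧
      (1 - χs) * Real.exp (B χs) + (1 + χs) * Real.exp (C χs) = 2 :=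
  correlation_global_max_general δ a A hδ ha B C ρ hB hC hρ
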